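/- arXiv:1901.07522 — 6 statements merged into one kernel-verified Lean document; each statement's English description precedes it below -/
import Mathlib

section
/- Let K be a compact Hausdorff space, X an Archimedean vector lattice, and T : C(K) → X a vector lattice homomorphism, with e = T(1). Then the image T[C(K)], equipped with the restriction of the norm ‖·‖_e on the order ideal I_e, is a complete normed space. -/
set_option linter.unusedSectionVars false


/-- `H_n`: positively homogeneous continuous functions `ℝⁿ → ℝ`. -/
def MemHn {n : ℕ} (f : (Fin n → ℝ) → ℝ) : Prop :=
  Continuous f ∧ ∀ (c : ℝ), 0 ≤ c → ∀ t, f (c • t) = c * f t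

/-- the `i`-th coordinate projection, an element of `H_n`. -/
def projFn (n : ℕ) (i : Fin n) : (Fin n → ℝ) → ℝ := fun t => t i

section VL
variable {X : Type*} [Lattice X] [AddCommGroup X] [Module ℝ X]

/-- A vector lattice homomorphism `H_n → X`, encoded as a map on all functions
that is linear and sup-preserving on members of `H_n`. -/
def IsVLHomHn {n : ℕ} (Φ : ((Fin n → ℝ) → ℝ) → X) : Prop :=
  (∀ f g, MemHn f → MemHn g → Φ (f + g) = Φ f + Φ g) ∧
  (∀ (c : ℝ) f, MemHn f → Φ (c • f) = c • Φ f) ∧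
  (∀ f g, MemHn f → MemHn g → Φ (f ⊔ g) = Φ f ⊔ Φ g)

/-- The order ideal generated by `e`. -/
def Ie (e : X) : Set X := {x | ∃ l : ℝ, 0 ≤ l ∧ |x| ≤ l • e}

/-- `‖x‖_e = inf {λ ≥ 0 : |x| ≤ λ e}`. -/
noncomputable def enorm (e x : X) : ℝ := sInf {l : ℝ | 0 ≤ l ∧ |x| ≤ l • e}

/-- A sublattice and linear subspace. -/
def IsSubl (S : Set X) : Prop :=
  (0 : X) ∈ S ∧ (∀ a ∈ S, ∀ b ∈ S, a + b ∈ S) ∧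
  (∀ (c : ℝ), ∀ a ∈ S, c • a ∈ S) ∧ (∀ a ∈ S, ∀ b ∈ S, a ⊔ b ∈ S)

/-- `S` is closed in the carrier `C` with respect to the `‖·‖_e`-distance. -/
def ClosedIn (e : X) (C S : Set X) : Prop :=
  ∀ x ∈ C, (∀ ε : ℝ, 0 < ε → ∃ y ∈ S, enorm e (x - y) < ε) → x ∈ S

/-- The closed sublattice of `C` generated by the set `A`. -/
def genClosedSubl (e : X) (C A : Set X) : Set X :=
  ⋂₀ {S : Set X | S ⊆ C ∧ A ⊆ S ∧ IsSubl S ∧ ClosedIn e C S}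

/-- The norm `‖·‖_e` is complete on `S`: every `‖·‖_e`-Cauchy sequence in `S`
converges, in `‖·‖_e`, to an element of `S`. -/
def CompleteOn (e : X) (S : Set X) : Prop :=
  ∀ u : ℕ → X, (∀ k, u k ∈ S) →
    (∀ ε : ℝ, 0 < ε → ∃ N, ∀ m ≥ N, ∀ n ≥ N, enorm e (u m - u n) < ε) →
    ∃ x ∈ S, ∀ ε : ℝ, 0 < ε → ∃ N, ∀ m ≥ N, enorm e (u m - x) < ε

end VL

/-- An Archimedean vector lattice. -/
def IsArchimedeanVL (X : Type*) [Lattice X] [AddCommGroup X] : Prop :=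
  ∀ x y : X, 0 ≤ x → 0 ≤ y → (∀ n : ℕ, n • x ≤ y) → x = 0

section Helpers
variable {X : Type*} [Lattice X] [AddCommGroup X] [Module ℝ X]
  [CovariantClass X X (· + ·) (· ≤ ·)]

lemma myEnorm_le {e x : X} {l : ℝ} (hl : 0 ≤ l) (h : |x| ≤ l • e) : enorm e x ≤ l :=
  csInf_le ⟨0, fun _ hy => hy.1⟩ ⟨hl, h⟩

lemma myEnorm_lt {e x : X} {ε : ℝ} (hne : ∃ l : ℝ, 0 ≤ l ∧ |x| ≤ l • e)
    (h : enorm e x < ε) : ∃ l : ℝ, 0 ≤ l ∧ |x| ≤ l • e ∧ l < ε := by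
  obtain ⟨l, hl, hlε⟩ := exists_lt_of_csInf_lt hne h
  exact ⟨l, hl.1, hl.2, hlε⟩

lemma eq_zero_of_abs_le_zero {y : X} (h : |y| ≤ 0) : y = 0 :=
  le_antisymm ((le_abs_self y).trans h) (neg_nonpos.mp ((neg_le_abs y).trans h))

end Helpers

section THelpers
variable {K : Type*} [TopologicalSpace K] [CompactSpace K]
  {X : Type*} [Lattice X] [AddCommGroup X] [Module ℝ X]
  [CovariantClass X X (· + ·) (· ≤ ·)]
  {T : C(K, ℝ) →ₗ[ℝ] X} (hT : ∀ f g : C(K, ℝ), T (f ⊔ g) = T f ⊔ T g)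

include hT

lemma T_mono {f g : C(K,ℝ)} (h : f ≤ g) : T f ≤ T g := by
  have h2 := hT f g
  rw [sup_eq_right.2 h] at h2
  rw [h2]; exact le_sup_left

lemma T_abs (f : C(K,ℝ)) : T |f| = |T f| := by
  have h1 : |f| = f ⊔ (-f) := rfl
  have h2 : |T f| = T f ⊔ (-(T f)) := rfl
  rw [h1, h2, hT, map_neg]

lemma T_abs_le_norm (f : C(K,ℝ)) : |T f| ≤ ‖f‖ • T 1 := by
  rw [← T_abs hT, ← map_smul]
  refine T_mono hT fun x => ?_
  simp only [ContinuousMap.toFun_eq_coe, ContinuousMap.abs_apply, ContinuousMap.smul_apply, ContinuousMap.one_apply,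
    smul_eq_mul, mul_one]
  rw [← Real.norm_eq_abs]
  exact f.norm_coe_le_norm x

omit hT in
lemma real_trunc (t l : ℝ) (hl : 0 ≤ l) : |t - max (min t l) (-l)| = max (|t| - l) 0 := by
  rcases le_total t l with h1 | h1
  · rcases le_total (-l) t with h2 | h2
    · rw [min_eq_left h1, max_eq_left h2, max_eq_right (by cases abs_cases t <;> linarith)]
      simp
    · rw [min_eq_left (by linarith), max_eq_right h2, abs_of_nonpos (by linarith),
        abs_of_nonpos (by linarith : t ≤ 0), max_eq_left (by linarith)]
      ring
  · rw [min_eq_right h1, max_eq_left (by linarith : -l ≤ l), abs_of_nonneg (by linarith),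
      abs_of_nonneg (by linarith : (0:ℝ) ≤ t), max_eq_left (by linarith)]

/-- truncation: if `|T f| ≤ l • T 1` then `T f` has a preimage of norm at most `l`. -/
lemma trunc_preimage (f : C(K,ℝ)) {l : ℝ} (hl : 0 ≤ l) (hle : |T f| ≤ l • T 1) :
    ∃ g : C(K,ℝ), T g = T f ∧ ‖g‖ ≤ l := by
  set g : C(K,ℝ) := (f ⊓ l • 1) ⊔ (-(l • (1:C(K,ℝ)))) with hg
  have hkey : |f - g| = (|f| - l • 1) ⊔ 0 := by
    ext x
    simp only [hg, ContinuousMap.abs_apply, ContinuousMap.sub_apply, ContinuousMap.sup_apply,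
      ContinuousMap.inf_apply, ContinuousMap.neg_apply, ContinuousMap.smul_apply,
      ContinuousMap.one_apply, ContinuousMap.zero_apply, smul_eq_mul, mul_one]
    exact real_trunc (f x) l hl
  have hzero : T (f - g) = 0 := by
    refine eq_zero_of_abs_le_zero ?_
    rw [← T_abs hT, hkey]
    have : T ((|f| - l • 1) ⊔ 0) = (T |f| - l • T 1) ⊔ 0 := by
      rw [hT, map_sub, map_smul, map_zero]
    rw [this, T_abs hT, sup_eq_right.2 (by rwa [sub_nonpos])]
  refine ⟨g, ?_, ?_⟩
  · have h3 := map_sub T f g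
    rw [hzero] at h3
    exact (sub_eq_zero.mp h3.symm).symm
  · refine (ContinuousMap.norm_le _ hl).2 fun x => ?_
    simp only [hg, ContinuousMap.sup_apply, ContinuousMap.inf_apply, ContinuousMap.neg_apply,
      ContinuousMap.smul_apply, ContinuousMap.one_apply, smul_eq_mul, mul_one,
      Real.norm_eq_abs]
    rw [abs_le]
    constructor
    · exact le_max_right _ _
    · exact max_le (min_le_right _ _) (by linarith)

end THelpers


set_option maxHeartbeats 1000000

/-- for a vector lattice homomorphism `T : C(K) → X` with `e = T 1`,
the image `T[C(K)]` is complete with respect to the norm `‖·‖_e`. -/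
theorem stmt1 {K : Type*} [TopologicalSpace K] [CompactSpace K] [T2Space K]
    {X : Type*} [Lattice X] [AddCommGroup X] [Module ℝ X]
    [CovariantClass X X (· + ·) (· ≤ ·)]
    (hArch : IsArchimedeanVL X)
    (T : C(K, ℝ) →ₗ[ℝ] X) (hT : ∀ f g : C(K, ℝ), T (f ⊔ g) = T f ⊔ T g)
    (e : X) (he : e = T 1) :
    CompleteOn e (Set.range T) := by
  unfold CompleteOn
  subst he
  intro u hu hC
  choose p hp using hu
  have hne : ∀ m n : ℕ, ∃ l : ℝ, 0 ≤ l ∧ |u m - u n| ≤ l • T 1 := by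
    intro m n
    refine ⟨‖p m - p n‖, norm_nonneg _, ?_⟩
    have h := T_abs_le_norm hT (p m - p n)
    rwa [map_sub, hp, hp] at h
  choose N hN using fun j : ℕ => hC ((1/2)^j) (by positivity)
  set k : ℕ → ℕ := fun j => j + (Finset.range (j+1)).sup N with hk
  have hkN : ∀ j, N j ≤ k j := fun j =>
    le_trans (Finset.le_sup (Finset.self_mem_range_succ j)) (Nat.le_add_left _ _)
  have hkN' : ∀ j, N j ≤ k (j+1) := fun j =>
    le_trans (Finset.le_sup (Finset.mem_range.2 (by omega))) (Nat.le_add_left _ _)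
  have hkj : ∀ j, j ≤ k j := fun j => Nat.le_add_right _ _
  have hstep : ∀ j, enorm (T 1) (u (k (j+1)) - u (k j)) < (1/2)^j := fun j =>
    hN j _ (hkN' j) _ (hkN j)
  have hgex : ∀ j, ∃ g : C(K,ℝ), T g = u (k (j+1)) - u (k j) ∧ ‖g‖ ≤ (1/2)^j := by
    intro j
    obtain ⟨l, hl0, hle, hlt⟩ := myEnorm_lt (hne _ _) (hstep j)
    have hTf : T (p (k (j+1)) - p (k j)) = u (k (j+1)) - u (k j) := by rw [map_sub, hp, hp]
    obtain ⟨g, hg1, hg2⟩ := trunc_preimage hT (p (k (j+1)) - p (k j)) hl0 (by rw [hTf]; exact hle)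
    exact ⟨g, by rw [hg1, hTf], hg2.trans hlt.le⟩
  choose g hg1 hg2 using hgex
  have hgeo : Summable (fun j : ℕ => ((1:ℝ)/2)^j) :=
    summable_geometric_of_lt_one (by norm_num) (by norm_num)
  have hsn : Summable (fun j => ‖g j‖) :=
    Summable.of_nonneg_of_le (fun j => norm_nonneg _) hg2 hgeo
  have hsum : Summable g := Summable.of_norm hsn
  set F : ℕ → C(K,ℝ) := fun j => p (k 0) + ∑ i ∈ Finset.range j, g i with hF
  have hTF : ∀ j, T (F j) = u (k j) := by
    intro j
    induction j with
    | zero => simp [hF, hp]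
    | succ n ih =>
      have hFn : F (n+1) = F n + g n := by
        simp [hF, Finset.sum_range_succ, add_assoc]
      rw [hFn, map_add, ih, hg1]
      abel
  set f : C(K,ℝ) := p (k 0) + ∑' i, g i with hf
  have htail : ∀ j, ‖f - F j‖ ≤ 2 * (1/2)^j := by
    intro j
    have h1 : f - F j = ∑' i, g (i + j) := by
      have h2 := Summable.sum_add_tsum_nat_add j hsum
      rw [hf, hF, ← h2, ← add_assoc]
      exact add_sub_cancel_left _ _
    rw [h1]
    have hs1 : Summable (fun i => ‖g (i + j)‖) := (summable_nat_add_iff j).2 hsn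
    have hs2 : Summable (fun i : ℕ => ((1:ℝ)/2)^(i + j)) := (summable_nat_add_iff j).2 hgeo
    calc ‖∑' i, g (i + j)‖ ≤ ∑' i, ‖g (i + j)‖ := norm_tsum_le_tsum_norm hs1
      _ ≤ ∑' i : ℕ, ((1:ℝ)/2)^(i + j) := Summable.tsum_le_tsum (fun i => hg2 _) hs1 hs2
      _ = 2 * (1/2)^j := by
          simp_rw [pow_add]
          rw [tsum_mul_right, tsum_geometric_of_lt_one (by norm_num) (by norm_num)]
          norm_num [mul_comm]
  refine ⟨T f, Set.mem_range_self f, ?_⟩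
  intro ε hε
  obtain ⟨M, hM⟩ := hC (ε/2) (by linarith)
  obtain ⟨j0, hj0⟩ := exists_pow_lt_of_lt_one (show (0:ℝ) < ε/4 by linarith)
    (by norm_num : (1/2:ℝ) < 1)
  set j := max j0 M with hj
  have hjpow : ((1:ℝ)/2)^j ≤ (1/2)^j0 :=
    pow_le_pow_of_le_one (by norm_num) (by norm_num) (le_max_left _ _)
  refine ⟨M, fun m hm => ?_⟩
  have hcj : M ≤ k j := le_trans (le_max_right j0 M) (hkj j)
  obtain ⟨l1, hl10, hl1e, hl1lt⟩ := myEnorm_lt (hne m (k j)) (hM m hm (k j) hcj)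
  have hl2e : |u (k j) - T f| ≤ ‖F j - f‖ • T 1 := by
    have h := T_abs_le_norm hT (F j - f)
    rwa [map_sub, hTF] at h
  have hl2lt : ‖F j - f‖ < ε/2 := by
    rw [norm_sub_rev]
    calc ‖f - F j‖ ≤ 2*(1/2)^j := htail j
      _ ≤ 2*(1/2)^j0 := by linarith
      _ < ε/2 := by linarith
  have habs : |u m - T f| ≤ (l1 + ‖F j - f‖) • T 1 := by
    have hsplit : u m - T f = (u m - u (k j)) + (u (k j) - T f) := by abel
    rw [hsplit, add_smul]
    exact (abs_add_le _ _).trans (add_le_add hl1e hl2e)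
  have hfin := myEnorm_le (add_nonneg hl10 (norm_nonneg _)) habs
  calc enorm (T 1) (u m - T f) ≤ l1 + ‖F j - f‖ := hfin
    _ < ε := by linarith
end

section
/- Let X be an Archimedean vector lattice, n ∈ ℕ, and x₁,…,xₙ ∈ X. Suppose there exists a vector lattice homomorphism Φ : H_n → X with Φ(π_i) = x_i for each i. Then, setting e = |x₁| ∨ ⋯ ∨ |xₙ|, the norm ‖·‖_e is complete on the closed sublattice of (I_e, ‖·‖_e) generated by x₁,…,xₙ. -/
set_option linter.unusedSectionVars false


section Hn
variable {n : ℕ} {f g : (Fin n → ℝ) → ℝ}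

lemma memHn_zero : MemHn (0 : (Fin n → ℝ) → ℝ) :=
  ⟨continuous_const, fun c _ t => by simp⟩

lemma memHn_add (hf : MemHn f) (hg : MemHn g) : MemHn (f + g) :=
  ⟨hf.1.add hg.1, fun c hc t => by
    simp [Pi.add_apply, hf.2 c hc t, hg.2 c hc t, mul_add]⟩

lemma memHn_smul (c : ℝ) (hf : MemHn f) : MemHn (c • f) :=
  ⟨hf.1.const_smul c, fun a ha t => by
    simp [Pi.smul_apply, smul_eq_mul, hf.2 a ha t]; ring⟩

lemma memHn_neg (hf : MemHn f) : MemHn (-f) := by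
  have := memHn_smul (-1) hf
  simpa using this

lemma memHn_sub (hf : MemHn f) (hg : MemHn g) : MemHn (f - g) := by
  have := memHn_add hf (memHn_neg hg)
  simpa [sub_eq_add_neg] using this

lemma memHn_sup (hf : MemHn f) (hg : MemHn g) : MemHn (f ⊔ g) :=
  ⟨hf.1.max hg.1, fun c hc t => by
    simp only [Pi.sup_apply, hf.2 c hc t, hg.2 c hc t]
    exact (mul_max_of_nonneg _ _ hc).symm⟩

lemma memHn_inf (hf : MemHn f) (hg : MemHn g) : MemHn (f ⊓ g) := by
  have h : f ⊓ g = -((-f) ⊔ (-g)) := by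
    funext t
    show f t ⊓ g t = -(-f t ⊔ -g t)
    rw [neg_sup, neg_neg, neg_neg]
  rw [h]; exact memHn_neg (memHn_sup (memHn_neg hf) (memHn_neg hg))

lemma memHn_abs (hf : MemHn f) : MemHn |f| := by
  have h : |f| = f ⊔ (-f) := by funext t; rfl
  rw [h]; exact memHn_sup hf (memHn_neg hf)

lemma memHn_proj (i : Fin n) : MemHn (projFn n i) :=
  ⟨continuous_apply i, fun c hc t => by simp [projFn]⟩

lemma memHn_norm : MemHn (fun t : Fin n → ℝ => ‖t‖) :=
  ⟨continuous_norm, fun c hc t => by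
    simp [norm_smul, Real.norm_eq_abs, abs_of_nonneg hc]⟩

end Hn

section Mn
variable {n : ℕ} {f g : (Fin n → ℝ) → ℝ}

noncomputable def Mn (f : (Fin n → ℝ) → ℝ) : ℝ :=
  sSup ((fun t => |f t|) '' Metric.closedBall 0 1)

lemma Mn_nonneg (f : (Fin n → ℝ) → ℝ) : 0 ≤ Mn f :=
  Real.sSup_nonneg (by rintro x ⟨t, _, rfl⟩; exact abs_nonneg _)

lemma Mn_le {c : ℝ} (hc : 0 ≤ c) (h : ∀ t : Fin n → ℝ, ‖t‖ ≤ 1 → |f t| ≤ c) :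
    Mn f ≤ c := by
  apply Real.sSup_le _ hc
  rintro x ⟨t, ht, rfl⟩
  exact h t (by simpa [dist_eq_norm] using Metric.mem_closedBall.1 ht)

lemma le_Mn (hf : Continuous f) {t : Fin n → ℝ} (ht : ‖t‖ ≤ 1) : |f t| ≤ Mn f := by
  apply le_csSup ((isCompact_closedBall (0 : Fin n → ℝ) 1).bddAbove_image (hf.abs.continuousOn))
  exact ⟨t, by simpa [Metric.mem_closedBall, dist_eq_norm] using ht, rfl⟩

lemma f_zero (hf : MemHn f) : f 0 = 0 := by
  have := hf.2 0 le_rfl 0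
  simpa using this

lemma Mn_bound (hf : MemHn f) (t : Fin n → ℝ) : |f t| ≤ Mn f * ‖t‖ := by
  rcases eq_or_ne t 0 with rfl | ht
  · simp [f_zero hf]
  · have hn : (0:ℝ) < ‖t‖ := norm_pos_iff.2 ht
    set s : Fin n → ℝ := ‖t‖⁻¹ • t with hs
    have hns : ‖s‖ ≤ 1 := by
      rw [hs, norm_smul, Real.norm_eq_abs, abs_of_nonneg (inv_nonneg.2 hn.le),
        inv_mul_cancel₀ hn.ne']
    have hts : f t = ‖t‖ * f s := by
      have := hf.2 ‖t‖ (norm_nonneg t) s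
      rw [hs, smul_inv_smul₀ hn.ne'] at this
      exact this
    rw [hts, abs_mul, abs_of_nonneg hn.le, mul_comm]
    exact mul_le_mul_of_nonneg_right (le_Mn hf.1 hns) hn.le

lemma Mn_sum_le {ι : Type*} (s : Finset ι) (g : ι → ((Fin n → ℝ) → ℝ))
    (hg : ∀ i ∈ s, Continuous (g i)) :
    Mn (∑ i ∈ s, g i) ≤ ∑ i ∈ s, Mn (g i) := by
  classical
  induction s using Finset.induction with
  | empty => simpa using Mn_le (f := (0 : (Fin n → ℝ) → ℝ)) le_rfl (fun t _ => by simp)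
  | insert _ _ hnotmem ih =>
    rename_i a s'
    rw [Finset.sum_insert hnotmem, Finset.sum_insert hnotmem]
    have hga : Continuous (g a) := hg a (Finset.mem_insert_self _ _)
    have hgs : ∀ i ∈ s', Continuous (g i) := fun i hi => hg i (Finset.mem_insert_of_mem hi)
    have hsum : Continuous (∑ i ∈ s', g i) := by
      have h2 : (∑ i ∈ s', g i) = fun t => ∑ i ∈ s', g i t := by
        funext t; simp [Finset.sum_apply]
      rw [h2]; exact continuous_finset_sum _ (fun i hi => hgs i hi)
    apply Mn_le (add_nonneg (Mn_nonneg _) (Finset.sum_nonneg fun i _ => Mn_nonneg _))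
    intro t ht
    calc |(g a + ∑ i ∈ s', g i) t| = |g a t + (∑ i ∈ s', g i) t| := by simp
      _ ≤ |g a t| + |(∑ i ∈ s', g i) t| := abs_add_le _ _
      _ ≤ Mn (g a) + Mn (∑ i ∈ s', g i) :=
          add_le_add (le_Mn hga ht) (le_Mn hsum ht)
      _ ≤ Mn (g a) + ∑ i ∈ s', Mn (g i) := by linarith [ih hgs]

end Mn

section Limit
variable {n : ℕ}

lemma HnLimit (h : ℕ → ((Fin n → ℝ) → ℝ)) (hmem : ∀ k, MemHn (h k))
    (hc : ∀ k m, k ≤ m → Mn (h m - h k) ≤ 2 * (2⁻¹:ℝ)^k) :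
    ∃ H, MemHn H ∧ ∀ k, Mn (H - h k) ≤ 2 * (2⁻¹:ℝ)^k := by
  have key : ∀ k m, k ≤ m → ∀ t, |h m t - h k t| ≤ 2 * (2⁻¹:ℝ)^k * ‖t‖ := by
    intro k m hkm t
    have h1 : |(h m - h k) t| ≤ Mn (h m - h k) * ‖t‖ :=
      Mn_bound (memHn_sub (hmem m) (hmem k)) t
    have h2 : |(h m - h k) t| = |h m t - h k t| := by simp
    rw [h2] at h1
    exact h1.trans (mul_le_mul_of_nonneg_right (hc k m hkm) (norm_nonneg t))
  have hcauchy : ∀ t, CauchySeq (fun k => h k t) := by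
    intro t
    apply cauchySeq_of_le_geometric (2⁻¹:ℝ) (2 * ‖t‖) (by norm_num)
    intro k
    rw [Real.dist_eq, abs_sub_comm]
    calc |h (k+1) t - h k t| ≤ 2 * (2⁻¹:ℝ)^k * ‖t‖ := key k (k+1) (Nat.le_succ k) t
      _ = 2 * ‖t‖ * (2⁻¹:ℝ)^k := by ring
  have hex : ∀ t, ∃ L, Filter.Tendsto (fun k => h k t) Filter.atTop (nhds L) :=
    fun t => cauchySeq_tendsto_of_complete (hcauchy t)
  choose H hH using hex
  have hHk : ∀ k t, |H t - h k t| ≤ 2 * (2⁻¹:ℝ)^k * ‖t‖ := by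
    intro k t
    have ht : Filter.Tendsto (fun m => |h m t - h k t|) Filter.atTop (nhds (|H t - h k t|)) :=
      ((hH t).sub_const (h k t)).abs
    apply le_of_tendsto ht
    filter_upwards [Filter.eventually_ge_atTop k] with m hm
    exact key k m hm t
  have hhomog : ∀ (c : ℝ), 0 ≤ c → ∀ t, H (c • t) = c * H t := by
    intro c hcn t
    have h1 : Filter.Tendsto (fun k => h k (c • t)) Filter.atTop (nhds (H (c • t))) := hH (c • t)
    have h2 : Filter.Tendsto (fun k => h k (c • t)) Filter.atTop (nhds (c * H t)) := by
      have : (fun k => h k (c • t)) = fun k => c * h k t := by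
        funext k; exact (hmem k).2 c hcn t
      rw [this]
      exact (hH t).const_mul c
    exact tendsto_nhds_unique h1 h2
  have hcont : Continuous H := by
    rw [continuous_iff_continuousAt]
    intro t₀
    set R : ℝ := ‖t₀‖ + 1 with hR
    have hRpos : 0 < R := by positivity
    have huc : TendstoUniformlyOn (fun k t => h k t) H Filter.atTop (Metric.ball (0 : Fin n → ℝ) R) := by
      rw [Metric.tendstoUniformlyOn_iff]
      intro ε hε
      have htend : Filter.Tendsto (fun k => 2 * (2⁻¹:ℝ)^k * R) Filter.atTop (nhds 0) := by
        have := tendsto_pow_atTop_nhds_zero_of_lt_one (by norm_num : (0:ℝ) ≤ 2⁻¹) (by norm_num : (2⁻¹:ℝ) < 1)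
        have h2 := this.const_mul (2 * R)
        simp only [mul_zero] at h2
        convert h2 using 2 with k
        ring
      filter_upwards [htend.eventually (gt_mem_nhds hε)] with k hk t ht
      have htR : ‖t‖ ≤ R := by
        rw [Metric.mem_ball, dist_zero_right] at ht
        exact ht.le
      have : dist (H t) (h k t) = |H t - h k t| := Real.dist_eq _ _
      rw [this]
      calc |H t - h k t| ≤ 2 * (2⁻¹:ℝ)^k * ‖t‖ := hHk k t
        _ ≤ 2 * (2⁻¹:ℝ)^k * R := by
            apply mul_le_mul_of_nonneg_left htR (by positivity)
        _ < ε := hk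
    have hmem' : t₀ ∈ Metric.ball (0 : Fin n → ℝ) R := by
      rw [Metric.mem_ball, dist_zero_right]; linarith
    exact (huc.continuousOn
      (Filter.Frequently.of_forall fun k => ((hmem k).1).continuousOn)).continuousAt
      (Metric.isOpen_ball.mem_nhds hmem')
  refine ⟨H, ⟨hcont, hhomog⟩, ?_⟩
  intro k
  apply Mn_le (by positivity)
  intro t ht
  have : |(H - h k) t| = |H t - h k t| := by simp
  rw [this]
  calc |H t - h k t| ≤ 2 * (2⁻¹:ℝ)^k * ‖t‖ := hHk k t
    _ ≤ 2 * (2⁻¹:ℝ)^k * 1 := mul_le_mul_of_nonneg_left ht (by positivity)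
    _ = 2 * (2⁻¹:ℝ)^k := mul_one _

end Limit

section VL0
variable {X : Type*} [Lattice X] [AddCommGroup X] [Module ℝ X]
  [CovariantClass X X (· + ·) (· ≤ ·)]


variable {n : ℕ} {Φ : ((Fin n → ℝ) → ℝ) → X} {f g : (Fin n → ℝ) → ℝ}

lemma phi_zero (hΦ : IsVLHomHn Φ) : Φ 0 = 0 := by
  have := hΦ.1 0 0 memHn_zero memHn_zero
  simp only [add_zero] at this
  exact left_eq_add.1 this

lemma phi_neg (hΦ : IsVLHomHn Φ) (hf : MemHn f) : Φ (-f) = -Φ f := by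
  have := hΦ.2.1 (-1) f hf
  simpa [neg_one_smul] using this

lemma phi_sub (hΦ : IsVLHomHn Φ) (hf : MemHn f) (hg : MemHn g) : Φ (f - g) = Φ f - Φ g := by
  have := hΦ.1 f (-g) hf (memHn_neg hg)
  rw [phi_neg hΦ hg] at this
  simpa [sub_eq_add_neg] using this

lemma phi_mono (hΦ : IsVLHomHn Φ) (hf : MemHn f) (hg : MemHn g) (h : f ≤ g) : Φ f ≤ Φ g := by
  have hs : f ⊔ g = g := sup_eq_right.2 h
  have := hΦ.2.2 f g hf hg
  rw [hs] at this
  rw [this]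
  exact le_sup_left

lemma phi_abs (hΦ : IsVLHomHn Φ) (hf : MemHn f) : Φ |f| = |Φ f| := by
  have h1 : |f| = f ⊔ (-f) := by funext t; rfl
  rw [h1, hΦ.2.2 f (-f) hf (memHn_neg hf), phi_neg hΦ hf]
  rfl

lemma phi_inf (hΦ : IsVLHomHn Φ) (hf : MemHn f) (hg : MemHn g) : Φ (f ⊓ g) = Φ f ⊓ Φ g := by
  have h1 : f ⊓ g = -((-f) ⊔ (-g)) := by
    funext t
    show f t ⊓ g t = -(-f t ⊔ -g t)
    rw [neg_sup, neg_neg, neg_neg]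
  rw [h1, phi_neg hΦ (memHn_sup (memHn_neg hf) (memHn_neg hg)),
    hΦ.2.2 _ _ (memHn_neg hf) (memHn_neg hg), phi_neg hΦ hf, phi_neg hΦ hg,
    neg_sup, neg_neg, neg_neg]

end VL0

section MainHelpers

lemma geo_bound (k m : ℕ) : ∑ j ∈ Finset.Ico k m, (2⁻¹:ℝ)^j ≤ 2 * (2⁻¹:ℝ)^k := by
  rcases le_or_gt k m with hkm | hkm
  · rw [Finset.sum_Ico_eq_sum_range]
    have h1 : ∀ j, (2⁻¹:ℝ)^(k+j) = (2⁻¹:ℝ)^k * (2⁻¹:ℝ)^j := fun j => pow_add _ _ _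
    calc (∑ j ∈ Finset.range (m - k), (2⁻¹:ℝ)^(k+j))
        = (2⁻¹:ℝ)^k * ∑ j ∈ Finset.range (m - k), (2⁻¹:ℝ)^j := by
          rw [Finset.mul_sum]; exact Finset.sum_congr rfl (fun j _ => h1 j)
      _ ≤ (2⁻¹:ℝ)^k * 2 := by
          apply mul_le_mul_of_nonneg_left _ (by positivity)
          have := sum_geometric_two_le (m - k)
          simpa [one_div] using this
      _ = 2 * (2⁻¹:ℝ)^k := mul_comm _ _
  · rw [Finset.Ico_eq_empty (by omega)]
    simp

variable {X : Type*} [Lattice X] [AddCommGroup X] [Module ℝ X]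
  [CovariantClass X X (· + ·) (· ≤ ·)]
  {n : ℕ} {Φ : ((Fin n → ℝ) → ℝ) → X} {e : X}

lemma phi_norm_eq (hΦ : IsVLHomHn Φ) {x : Fin n → X} (hproj : ∀ i, Φ (projFn n i) = x i)
    (he : IsLUB (Set.range fun i => |x i|) e) :
    Φ (fun t => ‖t‖) = e := by
  rcases Nat.eq_zero_or_pos n with hn | hn
  · subst hn
    have h0 : (fun t : Fin 0 → ℝ => ‖t‖) = 0 := by
      funext t
      have ht : t = 0 := Subsingleton.elim _ _
      simp [ht]
    rw [h0, phi_zero hΦ]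
    have h1 : ∀ y : X, e ≤ y := by
      intro y
      apply he.2
      rintro z ⟨i, rfl⟩
      exact i.elim0
    have h2 : e ≤ 0 := h1 0
    have h3 : (0:X) ≤ e := (le_add_iff_nonneg_right e).1 (h1 (e + e))
    exact le_antisymm h2 h3 ▸ rfl
  · haveI : Nonempty (Fin n) := ⟨⟨0, hn⟩⟩
    have hne : (Finset.univ : Finset (Fin n)).Nonempty := Finset.univ_nonempty
    have hind : ∀ (s : Finset (Fin n)) (hs : s.Nonempty),
        MemHn (s.sup' hs (fun i => |projFn n i|)) ∧
        Φ (s.sup' hs (fun i => |projFn n i|)) = s.sup' hs (fun i => |x i|) := by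
      intro s hs
      induction hs using Finset.Nonempty.cons_induction with
      | singleton i =>
        simp only [Finset.sup'_singleton]
        exact ⟨memHn_abs (memHn_proj i), by rw [phi_abs hΦ (memHn_proj i), hproj i]⟩
      | cons i s hi hs ih =>
        rw [Finset.sup'_cons (H := hs), Finset.sup'_cons (H := hs)]
        refine ⟨memHn_sup (memHn_abs (memHn_proj i)) ih.1, ?_⟩
        rw [hΦ.2.2 _ _ (memHn_abs (memHn_proj i)) ih.1, ih.2,
          phi_abs hΦ (memHn_proj i), hproj i]
    have hfun : (fun t : Fin n → ℝ => ‖t‖) =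
        Finset.univ.sup' hne (fun i => |projFn n i|) := by
      funext t
      rw [Finset.sup'_apply]
      apply le_antisymm
      · have hnn : (0:ℝ) ≤ Finset.univ.sup' hne (fun i => |projFn n i| t) := by
          refine le_trans (abs_nonneg (t ⟨0, hn⟩)) ?_
          exact Finset.le_sup' (fun i => |projFn n i| t) (Finset.mem_univ ⟨0, hn⟩)
        rw [pi_norm_le_iff_of_nonneg hnn]
        intro i
        rw [Real.norm_eq_abs]
        exact Finset.le_sup' (fun i => |projFn n i| t) (Finset.mem_univ i)
      · apply Finset.sup'_le
        intro i _
        show |t i| ≤ ‖t‖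
        simpa [Real.norm_eq_abs] using norm_le_pi_norm t i
    have hub : Finset.univ.sup' hne (fun i => |x i|) ∈
        upperBounds (Set.range fun i => |x i|) := by
      rintro z ⟨i, rfl⟩
      exact Finset.le_sup' (fun i => |x i|) (Finset.mem_univ i)
    have hle : e ≤ Finset.univ.sup' hne (fun i => |x i|) := he.2 hub
    have hge : Finset.univ.sup' hne (fun i => |x i|) ≤ e :=
      Finset.sup'_le _ _ (fun i _ => he.1 ⟨i, rfl⟩)
    rw [hfun, (hind _ hne).2]
    exact le_antisymm hge hle

end MainHelpers

/-- if a vector lattice homomorphism `Φ : H_n → X` with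
`Φ(π_i) = x_i` exists, then `‖·‖_e` is complete on the closed sublattice of
`I_e` generated by `x₁, …, xₙ`, where `e = |x₁| ∨ ⋯ ∨ |xₙ|`. -/
theorem stmt5 {X : Type*} [Lattice X] [AddCommGroup X] [Module ℝ X]
    [CovariantClass X X (· + ·) (· ≤ ·)]
    (hArch : IsArchimedeanVL X)
    (n : ℕ) (x : Fin n → X)
    (Φ : ((Fin n → ℝ) → ℝ) → X) (hΦ : IsVLHomHn Φ)
    (hproj : ∀ i, Φ (projFn n i) = x i)
    (e : X) (he : IsLUB (Set.range fun i => |x i|) e) :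
    CompleteOn e (genClosedSubl e (Ie e) (Set.range x)) := by
  classical
  set N : (Fin n → ℝ) → ℝ := fun t => ‖t‖ with hNdef
  have hNmem : MemHn N := memHn_norm
  have hNe : Φ N = e := phi_norm_eq hΦ hproj he
  have e_nonneg : (0:X) ≤ e := by
    have h1 : N = |N| := by
      funext t
      simp [hNdef, abs_of_nonneg (norm_nonneg t)]
    calc (0:X) ≤ |Φ N| := abs_nonneg _
      _ = Φ |N| := (phi_abs hΦ hNmem).symm
      _ = Φ N := by rw [← h1]
      _ = e := hNe
  have smul_e_nonneg : ∀ c : ℝ, 0 ≤ c → (0:X) ≤ c • e := by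
    intro c hc
    have h1 : c • e = Φ (c • N) := by rw [hΦ.2.1 c N hNmem, hNe]
    have h2 : c • N = |c • N| := by
      funext t
      show c * ‖t‖ = |c * ‖t‖|
      rw [abs_of_nonneg (mul_nonneg hc (norm_nonneg t))]
    rw [h1, h2, phi_abs hΦ (memHn_smul c hNmem)]
    exact abs_nonneg _
  have smul_e_mono : ∀ c d : ℝ, c ≤ d → c • e ≤ d • e := by
    intro c d hcd
    have h1 := smul_e_nonneg (d - c) (by linarith)
    rw [sub_smul] at h1
    exact sub_nonneg.1 h1
  have enorm_nonneg : ∀ z : X, 0 ≤ enorm e z :=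
    fun z => Real.sInf_nonneg (fun l hl => hl.1)
  have attain : ∀ z : X, z ∈ Ie e → |z| ≤ (enorm e z) • e := by
    intro z hz
    obtain ⟨l, hl0, hlz⟩ := hz
    have hSne : {l : ℝ | 0 ≤ l ∧ |z| ≤ l • e}.Nonempty := ⟨l, hl0, hlz⟩
    have hSbd : BddBelow {l : ℝ | 0 ≤ l ∧ |z| ≤ l • e} := ⟨0, fun m hm => hm.1⟩
    have key : ∀ m : ℕ, ((|z| - (enorm e z) • e) ⊔ 0) ≤ ((1:ℝ)/(m+1)) • e := by
      intro m
      have hlt : enorm e z < enorm e z + (1:ℝ)/(m+1) := by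
        have : (0:ℝ) < (1:ℝ)/(m+1) := by positivity
        linarith
      obtain ⟨l', hl'S, hl'lt⟩ := (csInf_lt_iff hSbd hSne).1 hlt
      have h1 : |z| ≤ (enorm e z + (1:ℝ)/(m+1)) • e :=
        le_trans hl'S.2 (smul_e_mono _ _ hl'lt.le)
      rw [add_smul] at h1
      have h2 : |z| - (enorm e z) • e ≤ ((1:ℝ)/(m+1)) • e := by
        rw [sub_le_iff_le_add]
        rw [add_comm]
        exact h1
      exact sup_le h2 (smul_e_nonneg _ (by positivity))
    have harch : ∀ m : ℕ, m • ((|z| - (enorm e z) • e) ⊔ 0) ≤ e := by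
      intro m
      rcases m with _ | k
      · simpa using e_nonneg
      · have h1 : (k+1) • ((|z| - (enorm e z) • e) ⊔ 0) ≤ (k+1) • (((1:ℝ)/(k+1)) • e) :=
          nsmul_le_nsmul_right (key k) (k+1)
        have h2 : (k+1) • (((1:ℝ)/(k+1)) • e) = e := by
          rw [← Nat.cast_smul_eq_nsmul ℝ, smul_smul]
          have : ((k:ℝ)+1) * ((1:ℝ)/(k+1)) = 1 := by
            field_simp
          rw [Nat.cast_add, Nat.cast_one, this, one_smul]
        rw [h2] at h1
        exact h1
    have hzero := hArch _ e le_sup_right e_nonneg harch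
    have h3 : |z| - (enorm e z) • e ≤ 0 := by
      calc |z| - (enorm e z) • e ≤ (|z| - (enorm e z) • e) ⊔ 0 := le_sup_left
        _ = 0 := hzero
    exact sub_nonpos.1 h3
  have enorm_le : ∀ z : X, ∀ l : ℝ, 0 ≤ l → |z| ≤ l • e → enorm e z ≤ l :=
    fun z l h1 h2 => csInf_le ⟨0, fun m hm => hm.1⟩ ⟨h1, h2⟩
  have Ie_sub : ∀ z w : X, z ∈ Ie e → w ∈ Ie e → z - w ∈ Ie e := by
    rintro z w ⟨a, ha0, haz⟩ ⟨b, hb0, hbw⟩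
    refine ⟨a + b, by linarith, ?_⟩
    calc |z - w| ≤ |z| + |(-w)| := by rw [sub_eq_add_neg]; exact abs_add_le z (-w)
      _ = |z| + |w| := by rw [abs_neg]
      _ ≤ a • e + b • e := add_le_add haz hbw
      _ = (a + b) • e := (add_smul a b e).symm
  have enorm_tri : ∀ z w : X, z ∈ Ie e → w ∈ Ie e →
      enorm e (z + w) ≤ enorm e z + enorm e w := by
    intro z w hz hw
    apply enorm_le _ _ (add_nonneg (enorm_nonneg z) (enorm_nonneg w))
    calc |z + w| ≤ |z| + |w| := abs_add_le z w
      _ ≤ (enorm e z) • e + (enorm e w) • e := add_le_add (attain z hz) (attain w hw)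
      _ = (enorm e z + enorm e w) • e := (add_smul _ _ e).symm
  have enorm_sub_comm : ∀ z w : X, enorm e (z - w) = enorm e (w - z) := by
    intro z w
    unfold _root_.enorm
    rw [abs_sub_comm]
  have enorm_zero_eq : ∀ z : X, z ∈ Ie e → (∀ ε : ℝ, 0 < ε → enorm e z < ε) → z = 0 := by
    intro z hz hsmall
    have h0 : enorm e z ≤ 0 := by
      by_contra hcon
      push_neg at hcon
      exact absurd (hsmall _ hcon) (lt_irrefl _)
    have heq : enorm e z = 0 := le_antisymm h0 (enorm_nonneg z)
    have h1 : |z| ≤ (0:X) := by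
      have := attain z hz
      rw [heq, zero_smul] at this
      exact this
    have h2 : z ≤ 0 := le_trans (le_abs_self z) h1
    have h3 : -z ≤ 0 := le_trans (neg_le_abs z) h1
    exact le_antisymm h2 (by simpa using h3)
  set S0 : Set X := {y | ∃ f, MemHn f ∧ Φ f = y} with hS0def
  have hcontr : ∀ f, MemHn f → |Φ f| ≤ (Mn f) • e := by
    intro f hf
    have h1 : |f| ≤ (Mn f) • N := by
      intro t
      show |f t| ≤ Mn f * ‖t‖
      exact Mn_bound hf t
    calc |Φ f| = Φ |f| := (phi_abs hΦ hf).symm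
      _ ≤ Φ ((Mn f) • N) := phi_mono hΦ (memHn_abs hf) (memHn_smul _ hNmem) h1
      _ = (Mn f) • e := by rw [hΦ.2.1 _ _ hNmem, hNe]
  have hS0Ie : S0 ⊆ Ie e := by
    rintro y ⟨f, hf, rfl⟩
    exact ⟨Mn f, Mn_nonneg f, hcontr f hf⟩
  have hS0enorm : ∀ f, MemHn f → enorm e (Φ f) ≤ Mn f :=
    fun f hf => enorm_le _ _ (Mn_nonneg f) (hcontr f hf)
  have htrunc : ∀ f, MemHn f → ∀ l : ℝ, 0 ≤ l → |Φ f| ≤ l • e →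
      ∃ g, MemHn g ∧ Φ g = Φ f ∧ Mn g ≤ l := by
    intro f hf l hl hfl
    set g : (Fin n → ℝ) → ℝ := (f ⊓ l • N) ⊔ (-(l • N)) with hgdef
    have hlN : MemHn (l • N) := memHn_smul l hNmem
    have hgmem : MemHn g := memHn_sup (memHn_inf hf hlN) (memHn_neg hlN)
    have hgM : Mn g ≤ l := by
      apply Mn_le hl
      intro t ht
      have hlt : (0:ℝ) ≤ l * ‖t‖ := mul_nonneg hl (norm_nonneg t)
      have hup : g t ≤ l * ‖t‖ := by
        apply sup_le
        · exact inf_le_right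
        · show -(l * ‖t‖) ≤ l * ‖t‖
          linarith
      have hdn : -(l * ‖t‖) ≤ g t := le_sup_right
      have habs : |g t| ≤ l * ‖t‖ := abs_le.2 ⟨hdn, hup⟩
      calc |g t| ≤ l * ‖t‖ := habs
        _ ≤ l * 1 := mul_le_mul_of_nonneg_left ht hl
        _ = l := mul_one l
    have hge : Φ g = Φ f := by
      have h1 : Φ g = (Φ f ⊓ l • e) ⊔ (-(l • e)) := by
        rw [hgdef, hΦ.2.2 _ _ (memHn_inf hf hlN) (memHn_neg hlN),
          phi_inf hΦ hf hlN, phi_neg hΦ hlN, hΦ.2.1 _ _ hNmem, hNe]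
      have h2 : Φ f ≤ l • e := le_trans (le_abs_self _) hfl
      have h3 : -(l • e) ≤ Φ f := by
        have h4 := le_trans (neg_le_abs (Φ f)) hfl
        exact neg_le.1 h4
      rw [h1, inf_eq_left.2 h2, sup_eq_left.2 h3]
    exact ⟨g, hgmem, hge, hgM⟩
  have hS0subl : IsSubl S0 := by
    refine ⟨⟨0, memHn_zero, phi_zero hΦ⟩, ?_, ?_, ?_⟩
    · rintro a ⟨f, hf, rfl⟩ b ⟨g, hg, rfl⟩
      exact ⟨f + g, memHn_add hf hg, hΦ.1 f g hf hg⟩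
    · rintro c a ⟨f, hf, rfl⟩
      exact ⟨c • f, memHn_smul c hf, hΦ.2.1 c f hf⟩
    · rintro a ⟨f, hf, rfl⟩ b ⟨g, hg, rfl⟩
      exact ⟨f ⊔ g, memHn_sup hf hg, hΦ.2.2 f g hf hg⟩
  have hxS0 : Set.range x ⊆ S0 := by
    rintro y ⟨i, rfl⟩
    exact ⟨projFn n i, memHn_proj i, hproj i⟩
  have hS0sub' : ∀ a b : X, a ∈ S0 → b ∈ S0 → a - b ∈ S0 := by
    rintro _ _ ⟨f, hf, rfl⟩ ⟨g, hg, rfl⟩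
    exact ⟨f - g, memHn_sub hf hg, phi_sub hΦ hf hg⟩
  have S0lim : ∀ v : ℕ → X, (∀ k, v k ∈ S0) →
      (∀ ε : ℝ, 0 < ε → ∃ K, ∀ a ≥ K, ∀ b ≥ K, enorm e (v a - v b) < ε) →
      ∃ y ∈ S0, ∀ ε : ℝ, 0 < ε → ∃ K, ∀ m ≥ K, enorm e (v m - y) < ε := by
    intro v hv hcau
    choose Nf hNf using fun k : ℕ => hcau ((2⁻¹:ℝ)^k) (by positivity)
    set φ : ℕ → ℕ := fun k => (Finset.range (k+1)).sup Nf + k with hφdef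
    have hφN : ∀ j k, j ≤ k → Nf j ≤ φ k := by
      intro j k hjk
      calc Nf j ≤ (Finset.range (k+1)).sup Nf :=
            Finset.le_sup (Finset.mem_range.2 (by omega))
        _ ≤ φ k := Nat.le_add_right _ _
    have hd : ∀ k, enorm e (v (φ (k+1)) - v (φ k)) < (2⁻¹:ℝ)^k := fun k =>
      hNf k _ (hφN k (k+1) (by omega)) _ (hφN k k le_rfl)
    have hgex : ∀ k : ℕ, ∃ g, MemHn g ∧ Φ g = v (φ (k+1)) - v (φ k) ∧ Mn g ≤ (2⁻¹:ℝ)^k := by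
      intro k
      obtain ⟨f, hf, hfe⟩ := hS0sub' _ _ (hv (φ (k+1))) (hv (φ k))
      have hIe : v (φ (k+1)) - v (φ k) ∈ Ie e :=
        Ie_sub _ _ (hS0Ie (hv _)) (hS0Ie (hv _))
      obtain ⟨g, hg, hge, hgM⟩ := htrunc f hf (enorm e (v (φ (k+1)) - v (φ k)))
        (enorm_nonneg _) (by rw [hfe]; exact attain _ hIe)
      exact ⟨g, hg, by rw [hge, hfe], hgM.trans (hd k).le⟩
    choose g hg1 hg2 hg3 using hgex
    obtain ⟨f0, hf0, hf0e⟩ := hv (φ 0)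
    set h : ℕ → ((Fin n → ℝ) → ℝ) := fun k => f0 + ∑ j ∈ Finset.range k, g j with hhdef
    have hsummem : ∀ k, MemHn (∑ j ∈ Finset.range k, g j) := by
      intro k
      induction k with
      | zero => simpa [Finset.sum_range_zero] using (memHn_zero (n := n))
      | succ k ih =>
        rw [Finset.sum_range_succ]
        exact memHn_add ih (hg1 k)
    have hhmem : ∀ k, MemHn (h k) := fun k => memHn_add hf0 (hsummem k)
    have hhΦ : ∀ k, Φ (h k) = v (φ k) := by
      intro k
      induction k with
      | zero => simpa [hhdef, Finset.sum_range_zero] using hf0e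
      | succ k ih =>
        have hstep : h (k+1) = h k + g k := by
          rw [hhdef]
          simp only [Finset.sum_range_succ]
          rw [add_assoc]
        rw [hstep, hΦ.1 _ _ (hhmem k) (hg1 k), ih, hg2 k]
        abel
    have hhcau : ∀ k m, k ≤ m → Mn (h m - h k) ≤ 2 * (2⁻¹:ℝ)^k := by
      intro k m hkm
      have hdiff : h m - h k = ∑ j ∈ Finset.Ico k m, g j := by
        rw [hhdef]
        simp only [add_sub_add_left_eq_sub]
        rw [Finset.sum_Ico_eq_sub _ hkm]
      rw [hdiff]
      calc Mn (∑ j ∈ Finset.Ico k m, g j) ≤ ∑ j ∈ Finset.Ico k m, Mn (g j) :=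
            Mn_sum_le _ _ (fun j _ => (hg1 j).1)
        _ ≤ ∑ j ∈ Finset.Ico k m, (2⁻¹:ℝ)^j := Finset.sum_le_sum (fun j _ => hg3 j)
        _ ≤ 2 * (2⁻¹:ℝ)^k := geo_bound k m
    obtain ⟨H, hHmem, hHk⟩ := HnLimit h hhmem hhcau
    refine ⟨Φ H, ⟨H, hHmem, rfl⟩, ?_⟩
    have hHlim : ∀ k, enorm e (Φ H - v (φ k)) ≤ 2 * (2⁻¹:ℝ)^k := by
      intro k
      rw [← hhΦ k, ← phi_sub hΦ hHmem (hhmem k)]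
      exact (hS0enorm _ (memHn_sub hHmem (hhmem k))).trans (hHk k)
    intro ε hε
    obtain ⟨k, hk⟩ := exists_pow_lt_of_lt_one (show (0:ℝ) < ε/3 by linarith)
      (show (2⁻¹:ℝ) < 1 by norm_num)
    refine ⟨φ k, ?_⟩
    intro m hm
    have h1 : enorm e (v m - v (φ k)) < (2⁻¹:ℝ)^k :=
      hNf k m (le_trans (hφN k k le_rfl) hm) (φ k) (hφN k k le_rfl)
    have h2 : enorm e (v (φ k) - Φ H) ≤ 2 * (2⁻¹:ℝ)^k := by
      rw [enorm_sub_comm]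
      exact hHlim k
    have hIe1 : v m - v (φ k) ∈ Ie e := Ie_sub _ _ (hS0Ie (hv m)) (hS0Ie (hv _))
    have hIe2 : v (φ k) - Φ H ∈ Ie e := Ie_sub _ _ (hS0Ie (hv _)) (hS0Ie ⟨H, hHmem, rfl⟩)
    have tri : enorm e (v m - Φ H) ≤
        enorm e (v m - v (φ k)) + enorm e (v (φ k) - Φ H) := by
      have := enorm_tri _ _ hIe1 hIe2
      rw [sub_add_sub_cancel] at this
      exact this
    calc enorm e (v m - Φ H) ≤ enorm e (v m - v (φ k)) + enorm e (v (φ k) - Φ H) := tri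
      _ < (2⁻¹:ℝ)^k + 2 * (2⁻¹:ℝ)^k := by
          apply add_lt_add_of_lt_of_le h1 h2
      _ = 3 * (2⁻¹:ℝ)^k := by ring
      _ < 3 * (ε/3) := by linarith
      _ = ε := by ring
  have hS0closed : ClosedIn e (Ie e) S0 := by
    intro z hz happ
    have happ' : ∀ k : ℕ, ∃ y ∈ S0, enorm e (z - y) < (2⁻¹:ℝ)^k :=
      fun k => happ ((2⁻¹:ℝ)^k) (by positivity)
    choose w hw1 hw2 using happ'
    have hwIe : ∀ k, w k ∈ Ie e := fun k => hS0Ie (hw1 k)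
    have hcau : ∀ ε : ℝ, 0 < ε → ∃ K, ∀ a ≥ K, ∀ b ≥ K, enorm e (w a - w b) < ε := by
      intro ε hε
      obtain ⟨K, hK⟩ := exists_pow_lt_of_lt_one (show (0:ℝ) < ε/2 by linarith)
        (show (2⁻¹:ℝ) < 1 by norm_num)
      refine ⟨K, ?_⟩
      intro a ha b hb
      have hpow : ∀ c : ℕ, K ≤ c → (2⁻¹:ℝ)^c ≤ (2⁻¹:ℝ)^K := fun c hc =>
        pow_le_pow_of_le_one (by norm_num) (by norm_num) hc
      have tri : enorm e (w a - w b) ≤ enorm e (w a - z) + enorm e (z - w b) := by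
        have := enorm_tri _ _ (Ie_sub _ _ (hwIe a) hz) (Ie_sub _ _ hz (hwIe b))
        rw [sub_add_sub_cancel] at this
        exact this
      have h1 : enorm e (w a - z) < (2⁻¹:ℝ)^K := by
        rw [enorm_sub_comm]
        exact lt_of_lt_of_le (hw2 a) (hpow a ha)
      have h2 : enorm e (z - w b) < (2⁻¹:ℝ)^K := lt_of_lt_of_le (hw2 b) (hpow b hb)
      calc enorm e (w a - w b) ≤ enorm e (w a - z) + enorm e (z - w b) := tri
        _ < (2⁻¹:ℝ)^K + (2⁻¹:ℝ)^K := add_lt_add h1 h2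
        _ = 2 * (2⁻¹:ℝ)^K := by ring
        _ < 2 * (ε/2) := by linarith
        _ = ε := by ring
    obtain ⟨y, hyS0, hconv⟩ := S0lim w hw1 hcau
    have hzy : z = y := by
      have hIezy : z - y ∈ Ie e := Ie_sub _ _ hz (hS0Ie hyS0)
      have hzero : z - y = 0 := by
        apply enorm_zero_eq _ hIezy
        intro ε hε
        obtain ⟨k, hk⟩ := exists_pow_lt_of_lt_one (show (0:ℝ) < ε/2 by linarith)
          (show (2⁻¹:ℝ) < 1 by norm_num)
        obtain ⟨K, hK⟩ := hconv (ε/2) (by linarith)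
        set m := max k K with hm
        have tri : enorm e (z - y) ≤ enorm e (z - w m) + enorm e (w m - y) := by
          have := enorm_tri _ _ (Ie_sub _ _ hz (hwIe m)) (Ie_sub _ _ (hwIe m) (hS0Ie hyS0))
          rw [sub_add_sub_cancel] at this
          exact this
        have h1 : enorm e (z - w m) < ε/2 := by
          have hpm : (2⁻¹:ℝ)^m ≤ (2⁻¹:ℝ)^k :=
            pow_le_pow_of_le_one (by norm_num) (by norm_num) (le_max_left k K)
          exact lt_of_lt_of_le (hw2 m) (le_of_lt (lt_of_le_of_lt hpm hk))
        have h2 : enorm e (w m - y) < ε/2 := hK m (le_max_right k K)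
        calc enorm e (z - y) ≤ enorm e (z - w m) + enorm e (w m - y) := tri
          _ < ε/2 + ε/2 := add_lt_add h1 h2
          _ = ε := by ring
      have := sub_eq_zero.1 hzero
      exact this
    rw [hzy]
    exact hyS0
  -- final assembly
  have hS0mem : S0 ∈ {S : Set X | S ⊆ Ie e ∧ Set.range x ⊆ S ∧ IsSubl S ∧ ClosedIn e (Ie e) S} :=
    ⟨hS0Ie, hxS0, hS0subl, hS0closed⟩
  intro u hu hucau
  have huS0 : ∀ k, u k ∈ S0 := fun k => (hu k) S0 hS0mem
  obtain ⟨y, hyS0, hconv⟩ := S0lim u huS0 hucau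
  refine ⟨y, ?_, hconv⟩
  intro S hS
  obtain ⟨hSC, hSA, hSsubl, hSclosed⟩ := hS
  apply hSclosed y (hS0Ie hyS0)
  intro ε hε
  obtain ⟨K, hK⟩ := hconv ε hε
  refine ⟨u K, (hu K) S ⟨hSC, hSA, hSsubl, hSclosed⟩, ?_⟩
  rw [enorm_sub_comm]
  exact hK K le_rfl
end

section
/- Let X be a real vector space equipped with, for each n ∈ ℕ and x ∈ Xⁿ, a linear map Φ_x : H_n → X satisfying Φ_x(π_i) = x_i and the composition rule Φ_{(Φ_x(f₁),…,Φ_x(f_m))}(g) = Φ_x(g ∘ (f₁ × ⋯ × f_m)). Define a relation on X by x ≤ y iff σ(x,y) = y, where σ ∈ H₂ is σ(t₁,t₂) = max(t₁,t₂) and σ(x,y) denotes Φ_{(x,y)}(σ). Then ≤ is a partial order on X. -/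
/-- The pointwise-maximum function `σ(t₁,t₂) = t₁ ∨ t₂`, an element of `H₂`. -/
noncomputable def sigmaMax : (Fin 2 → ℝ) → ℝ := fun t => max (t 0) (t 1)

/-! Reflexivity, antisymmetry and transitivity of `≤` are the images under suitable `Φ_v`
of idempotency, commutativity and associativity of `max` on `ℝ`: the composition rule lets
one compute every `σ(a, b)` occurring in the hypotheses inside a single `Φ_v`,
with `v = (x, y, z)`. -/

theorem memHn_projFn {n : ℕ} (i : Fin n) : MemHn (projFn n i) :=
  ⟨continuous_apply i, fun _ _ _ => rfl⟩

theorem MemHn.sup {n : ℕ} {f g : (Fin n → ℝ) → ℝ} (hf : MemHn f) (hg : MemHn g) :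
    MemHn (fun t => max (f t) (g t)) := by
  refine ⟨hf.1.max hg.1, fun c hc t => ?_⟩
  show max (f (c • t)) (g (c • t)) = c * max (f t) (g t)
  rw [hf.2 c hc t, hg.2 c hc t, mul_max_of_nonneg _ _ hc]

theorem memHn_sigmaMax : MemHn sigmaMax :=
  (memHn_projFn 0).sup (memHn_projFn 1)

theorem sigmaMax_eq_of_comp {X : Type*}
    {Φ : ∀ n : ℕ, (Fin n → X) → ((Fin n → ℝ) → ℝ) → X}
    (hcomp : ∀ (m n : ℕ) (x : Fin n → X) (f : Fin m → ((Fin n → ℝ) → ℝ))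
      (g : (Fin m → ℝ) → ℝ), (∀ i, MemHn (f i)) → MemHn g →
      Φ m (fun i => Φ n x (f i)) g = Φ n x (fun t => g (fun i => f i t)))
    {n : ℕ} {v : Fin n → X} {f g : (Fin n → ℝ) → ℝ} (hf : MemHn f) (hg : MemHn g)
    {a b : X} (ha : Φ n v f = a) (hb : Φ n v g = b) :
    Φ 2 ![a, b] sigmaMax = Φ n v (fun t => max (f t) (g t)) := by
  have hab : (fun i => Φ n v (![f, g] i)) = ![a, b] := by
    ext i
    fin_cases i
    exacts [ha, hb]
  rw [← hab]
  exact hcomp 2 n v ![f, g] sigmaMax (Fin.forall_fin_two.2 ⟨hf, hg⟩) memHn_sigmaMax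

theorem stmt10_general {X : Type*}
    (Φ : ∀ n : ℕ, (Fin n → X) → ((Fin n → ℝ) → ℝ) → X)
    (hproj : ∀ (n : ℕ) (x : Fin n → X) (i : Fin n), Φ n x (projFn n i) = x i)
    (hcomp : ∀ (m n : ℕ) (x : Fin n → X) (f : Fin m → ((Fin n → ℝ) → ℝ))
      (g : (Fin m → ℝ) → ℝ), (∀ i, MemHn (f i)) → MemHn g →
      Φ m (fun i => Φ n x (f i)) g = Φ n x (fun t => g (fun i => f i t))) :
    (∀ x : X, Φ 2 ![x, x] sigmaMax = x) ∧
    (∀ x y : X, Φ 2 ![x, y] sigmaMax = y → Φ 2 ![y, x] sigmaMax = x → x = y) ∧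
    (∀ x y z : X, Φ 2 ![x, y] sigmaMax = y → Φ 2 ![y, z] sigmaMax = z →
      Φ 2 ![x, z] sigmaMax = z) := by
  refine ⟨fun x => ?_, fun x y hxy hyx => ?_, fun x y z hxy hyz => ?_⟩
  · have hx : Φ 1 ![x] (projFn 1 0) = x := hproj 1 ![x] 0
    rw [sigmaMax_eq_of_comp hcomp (memHn_projFn 0) (memHn_projFn 0) hx hx]
    simpa only [max_self] using hx
  · have hx : Φ 2 ![x, y] (projFn 2 0) = x := hproj 2 ![x, y] 0
    have hy : Φ 2 ![x, y] (projFn 2 1) = y := hproj 2 ![x, y] 1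
    rw [sigmaMax_eq_of_comp hcomp (memHn_projFn 1) (memHn_projFn 0) hy hx] at hyx
    have hσ : (fun t => max (projFn 2 1 t) (projFn 2 0 t)) = sigmaMax :=
      funext fun _ => max_comm _ _
    rw [hσ] at hyx
    exact hyx.symm.trans hxy
  · set v : Fin 3 → X := ![x, y, z]
    have hx : Φ 3 v (projFn 3 0) = x := hproj 3 v 0
    have hy : Φ 3 v (projFn 3 1) = y := hproj 3 v 1
    have hz : Φ 3 v (projFn 3 2) = z := hproj 3 v 2
    have h01 := (sigmaMax_eq_of_comp hcomp (memHn_projFn 0) (memHn_projFn 1) hx hy).symm.trans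
      hxy
    have h12 := (sigmaMax_eq_of_comp hcomp (memHn_projFn 1) (memHn_projFn 2) hy hz).symm.trans
      hyz
    have h012 := (sigmaMax_eq_of_comp hcomp ((memHn_projFn 0).sup (memHn_projFn 1))
      (memHn_projFn 2) h01 hz).symm.trans hyz
    rw [sigmaMax_eq_of_comp hcomp (memHn_projFn 0) ((memHn_projFn 1).sup (memHn_projFn 2)) hx h12,
      ← h012]
    simp only [max_assoc]

/-- given a vector space `X` with linear maps `Φ_x : H_n → X`
satisfying the projection and composition rules, the relation
`x ≤ y ⇔ σ(x,y) = y` is a partial order on `X`. -/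
theorem stmt10 {X : Type*} [AddCommGroup X] [Module ℝ X]
    (Φ : ∀ n : ℕ, (Fin n → X) → ((Fin n → ℝ) → ℝ) → X)
    (hadd : ∀ (n : ℕ) (x : Fin n → X) (f g : (Fin n → ℝ) → ℝ),
      MemHn f → MemHn g → Φ n x (f + g) = Φ n x f + Φ n x g)
    (hsmul : ∀ (n : ℕ) (x : Fin n → X) (c : ℝ) (f : (Fin n → ℝ) → ℝ),
      MemHn f → Φ n x (c • f) = c • Φ n x f)
    (hproj : ∀ (n : ℕ) (x : Fin n → X) (i : Fin n), Φ n x (projFn n i) = x i)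
    (hcomp : ∀ (m n : ℕ) (x : Fin n → X) (f : Fin m → ((Fin n → ℝ) → ℝ))
      (g : (Fin m → ℝ) → ℝ), (∀ i, MemHn (f i)) → MemHn g →
      Φ m (fun i => Φ n x (f i)) g = Φ n x (fun t => g (fun i => f i t))) :
    (∀ x : X, Φ 2 ![x, x] sigmaMax = x) ∧
    (∀ x y : X, Φ 2 ![x, y] sigmaMax = y → Φ 2 ![y, x] sigmaMax = x → x = y) ∧
    (∀ x y z : X, Φ 2 ![x, y] sigmaMax = y → Φ 2 ![y, z] sigmaMax = z →
      Φ 2 ![x, z] sigmaMax = z) :=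
  stmt10_general Φ hproj hcomp
end

section
/- Let K be a compact Hausdorff space and s₀ ∈ K an accumulation point of a countably infinite subset of K. Then X = {f ∈ C(K) : f is constant on some neighbourhood of s₀} is a proper dense sublattice of C(K) with respect to the supremum norm. -/
/-!
Each lattice-linear operation is computed pointwise, so it preserves being constant near `s₀`.
For density, subtracting from `f` its deviation `f - f s₀` clipped to `[-δ, δ]` moves `f` by at
most `δ` and makes it constant where `|f - f s₀| < δ`. For properness, a series `h = ∑ₜ wₜ gₜ`
with summable weights `wₜ > 0` and functions `gₜ : K → [0, 1]` with `gₜ s₀ = 0`, `gₜ t = 1`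
satisfies `h s₀ = 0 < h t` for every `t` in the countable set `S \ {s₀}`, which meets every
neighbourhood of `s₀`.
-/

open Filter Set Topology

theorem Filter.Eventually.map₂_eq_apply {X α β γ : Type*} {l : Filter X} {x₀ : X} {f : X → α}
    {g : X → β} (op : α → β → γ) (hf : ∀ᶠ t in l, f t = f x₀) (hg : ∀ᶠ t in l, g t = g x₀) :
    ∀ᶠ t in l, op (f t) (g t) = op (f x₀) (g x₀) :=
  (hf.and hg).mono fun _ ⟨hft, hgt⟩ ↦ by rw [hft, hgt]

section

variable {X : Type*} [TopologicalSpace X]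

theorem exists_continuous_eq_zero_pos_of_countable [CompletelyRegularSpace X] [T1Space X]
    {x₀ : X} {T : Set X} (hT : T.Countable) (hx₀ : x₀ ∉ T) :
    ∃ h : C(X, ℝ), h x₀ = 0 ∧ ∀ t ∈ T, 0 < h t := by
  obtain ⟨w, hw_pos, _, hw_sum, -⟩ := hT.exists_pos_hasSum_le one_pos
  have hsep (t : T) : ∃ g : X → unitInterval, Continuous g ∧ g x₀ = 0 ∧ g t = 1 := by
    obtain ⟨g, hg, hgx₀, hgt⟩ := CompletelyRegularSpace.completely_regular x₀ {(t : X)}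
      isClosed_singleton fun h ↦ hx₀ (h ▸ t.2)
    exact ⟨g, hg, hgx₀, hgt rfl⟩
  choose g hg_cont hg_x₀ hg_t using hsep
  have hterm_le (t : T) (x : X) : w t * g t x ≤ w t :=
    mul_le_of_le_one_right (hw_pos t).le (g t x).2.2
  have hterm_nonneg (t : T) (x : X) : 0 ≤ w t * g t x := mul_nonneg (hw_pos t).le (g t x).2.1
  refine ⟨⟨fun x ↦ ∑' t : T, w t * g t x, ?_⟩, ?_, fun t ht ↦ ?_⟩
  · refine continuous_tsum (fun t ↦ continuous_const.mul (continuous_subtype_val.comp (hg_cont t)))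
      hw_sum.summable fun t x ↦ ?_
    rw [Real.norm_of_nonneg (hterm_nonneg t x)]
    exact hterm_le t x
  · simp [hg_x₀]
  · refine Summable.tsum_pos (hw_sum.summable.of_nonneg_of_le (hterm_nonneg · t) (hterm_le · t))
      (hterm_nonneg · t) ⟨t, ht⟩ ?_
    simpa [hg_t] using hw_pos t

theorem ContinuousMap.exists_dist_le_eventually_eq [CompactSpace X] (f : C(X, ℝ)) (x₀ : X)
    {δ : ℝ} (hδ : 0 < δ) : ∃ g : C(X, ℝ), dist g f ≤ δ ∧ ∀ᶠ t in 𝓝 x₀, g t = f x₀ := by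
  set c := f x₀
  refine ⟨f - ((f - const X c) ⊓ const X δ ⊔ const X (-δ)), ?_, ?_⟩
  · refine (ContinuousMap.dist_le hδ.le).2 fun x ↦ ?_
    simp only [coe_sub, coe_sup, coe_inf, coe_const, Pi.sub_apply, Pi.sup_apply, Pi.inf_apply,
      Function.const_apply, Real.dist_eq, sub_sub_cancel_left, abs_neg, abs_le]
    exact ⟨le_sup_right, sup_le inf_le_right (by linarith)⟩
  · have hnear : ∀ᶠ t in 𝓝 x₀, f t ∈ Ioo (c - δ) (c + δ) :=
      f.continuous.continuousAt (Ioo_mem_nhds (by linarith) (by linarith))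
    filter_upwards [hnear] with t ⟨hlo, hhi⟩
    simp only [coe_sub, coe_sup, coe_inf, coe_const, Pi.sub_apply, Pi.sup_apply, Pi.inf_apply,
      Function.const_apply]
    rw [inf_eq_left.2 (by linarith), sup_eq_left.2 (by linarith), sub_sub_cancel]

theorem ContinuousMap.dense_setOf_eventually_eq_apply [CompactSpace X] (x₀ : X) :
    Dense {f : C(X, ℝ) | ∀ᶠ t in 𝓝 x₀, f t = f x₀} := by
  refine Metric.dense_iff.2 fun f ε hε ↦ ?_
  obtain ⟨g, hgf, hg⟩ := f.exists_dist_le_eventually_eq x₀ (half_pos hε)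
  refine ⟨g, Metric.mem_ball.2 (hgf.trans_lt (half_lt_self hε)), ?_⟩
  show ∀ᶠ t in 𝓝 x₀, g t = g x₀
  rwa [hg.self_of_nhds]

end

theorem stmt14_general {K : Type*} [TopologicalSpace K] [CompactSpace K] [T2Space K]
    (s₀ : K) (S : Set K) (hS : S.Countable)
    (hacc : AccPt s₀ (Filter.principal S))
    (X : Set C(K, ℝ))
    (hX : X = {f : C(K, ℝ) | ∃ U ∈ nhds s₀, ∀ t ∈ U, f t = f s₀}) :
    -- `X` is a sublattice (and linear subspace) of `C(K)`:
    ((0 : C(K, ℝ)) ∈ X ∧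
     (∀ f ∈ X, ∀ g ∈ X, f + g ∈ X) ∧
     (∀ (c : ℝ), ∀ f ∈ X, c • f ∈ X) ∧
     (∀ f ∈ X, ∀ g ∈ X, f ⊔ g ∈ X) ∧
     (∀ f ∈ X, ∀ g ∈ X, f ⊓ g ∈ X)) ∧
    -- proper:
    X ≠ Set.univ ∧
    -- dense:
    Dense X := by
  simp only [← eventually_iff_exists_mem] at hX
  subst hX
  refine ⟨⟨by simp, fun f hf g hg ↦ by simpa using hf.map₂_eq_apply (· + ·) hg,
    fun c f hf ↦ hf.mono fun t ht ↦ by simp [ht],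
    fun f hf g hg ↦ by simpa using hf.map₂_eq_apply (· ⊔ ·) hg,
    fun f hf g hg ↦ by simpa using hf.map₂_eq_apply (· ⊓ ·) hg⟩, ?_,
    ContinuousMap.dense_setOf_eventually_eq_apply s₀⟩
  obtain ⟨h, hs₀, hpos⟩ :=
    exists_continuous_eq_zero_pos_of_countable (hS.mono sdiff_subset)
      (notMem_sdiff_of_mem (mem_singleton s₀))
  intro huniv
  have hconst : ∀ᶠ t in 𝓝 s₀, h t = h s₀ := huniv.ge (mem_univ h)
  obtain ⟨y, hy, hys₀, hyS⟩ := (hconst.and_frequently (accPt_iff_frequently.1 hacc)).exists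
  exact (hpos y ⟨hyS, hys₀⟩).ne' (hy.trans hs₀)

/-- if `s₀` is an accumulation point of a countably infinite
subset of the compact Hausdorff space `K`, then
`X = {f ∈ C(K) : f is constant on a neighbourhood of s₀}` is a proper dense
sublattice of `C(K)` (with the supremum-norm topology). -/
theorem stmt14 {K : Type*} [TopologicalSpace K] [CompactSpace K] [T2Space K]
    (s₀ : K) (S : Set K) (hS : S.Countable) (hSinf : S.Infinite)
    (hacc : AccPt s₀ (Filter.principal S))
    (X : Set C(K, ℝ))
    (hX : X = {f : C(K, ℝ) | ∃ U ∈ nhds s₀, ∀ t ∈ U, f t = f s₀}) :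
    -- `X` is a sublattice (and linear subspace) of `C(K)`:
    ((0 : C(K, ℝ)) ∈ X ∧
     (∀ f ∈ X, ∀ g ∈ X, f + g ∈ X) ∧
     (∀ (c : ℝ), ∀ f ∈ X, c • f ∈ X) ∧
     (∀ f ∈ X, ∀ g ∈ X, f ⊔ g ∈ X) ∧
     (∀ f ∈ X, ∀ g ∈ X, f ⊓ g ∈ X)) ∧
    -- proper:
    X ≠ Set.univ ∧
    -- dense:
    Dense X :=
  stmt14_general s₀ S hS hacc X hX
end

section
/- Let K be an infinite compact Hausdorff space and s₀ an accumulation point of a countably infinite subset of K. Then the sublattice X = {f ∈ C(K) : f is constant on some neighbourhood of s₀} is finitely uniformly complete but not uniformly complete. -/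
/-!
For `e` a positive constant, `‖·‖_e` is a multiple of the sup norm, so completeness questions
in `I_e = C(K)` are questions about sup-norm limits.

Finitely many members of `X` are constant on a common neighbourhood `W` of `s₀`; the functions
constant on `W` form a sup-norm closed sublattice of `X`, which therefore contains the closed
sublattice they generate and the limits of its Cauchy sequences.

Conversely, enumerate the points `tₖ ≠ s₀` of `S` and take Urysohn functions `wₖ` with
`wₖ tₖ = 1` vanishing near `s₀`. The partial sums of `∑ 2⁻ᵏ wₖ` lie in `X`, but the sum vanishes
at `s₀` and is positive at every `tₖ`, which accumulate at `s₀`, so it is not in `X`.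
-/

open Filter Topology

section SupNorm

variable {K : Type*} [TopologicalSpace K] [CompactSpace K]

lemma ContinuousMap.abs_le_const_iff {f : C(K, ℝ)} {c : ℝ} (hc : 0 ≤ c) :
    |f| ≤ ContinuousMap.const K c ↔ ‖f‖ ≤ c := by
  rw [ContinuousMap.norm_le _ hc, ContinuousMap.le_def]
  simp [Real.norm_eq_abs]

lemma enorm_const {c : ℝ} (hc : 0 < c) (f : C(K, ℝ)) :
    enorm (ContinuousMap.const K c) f = ‖f‖ / c := by
  have hconst (l : ℝ) : l • ContinuousMap.const K c = ContinuousMap.const K (l * c) := rfl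
  have hset : {l : ℝ | 0 ≤ l ∧ |f| ≤ l • ContinuousMap.const K c} = Set.Ici (‖f‖ / c) := by
    ext l
    change 0 ≤ l ∧ _ ↔ _ ≤ l
    rw [hconst, div_le_iff₀ hc]
    constructor
    · rintro ⟨hl, hf⟩
      rwa [ContinuousMap.abs_le_const_iff (by positivity)] at hf
    · intro hf
      have hl : 0 ≤ l := nonneg_of_mul_nonneg_left ((norm_nonneg f).trans hf) hc
      rw [ContinuousMap.abs_le_const_iff (by positivity)]
      exact ⟨hl, hf⟩
  rw [_root_.enorm, hset, csInf_Ici]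

lemma mem_Ie_const {c : ℝ} (hc : 0 < c) (f : C(K, ℝ)) : f ∈ Ie (ContinuousMap.const K c) :=
  ⟨‖f‖ / c, by positivity, by
    rw [show (‖f‖ / c) • ContinuousMap.const K c = ContinuousMap.const K (‖f‖ / c * c) from rfl,
      ContinuousMap.abs_le_const_iff (by positivity), div_mul_cancel₀ _ hc.ne']⟩

lemma forall_pos_mul_iff {c : ℝ} (hc : 0 < c) {p : ℝ → Prop} :
    (∀ ε, 0 < ε → p (ε * c)) ↔ ∀ ε, 0 < ε → p ε :=
  ⟨fun h ε hε => div_mul_cancel₀ ε hc.ne' ▸ h (ε / c) (by positivity),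
    fun h ε hε => h (ε * c) (by positivity)⟩

lemma enorm_const_lt_iff {c : ℝ} (hc : 0 < c) (f : C(K, ℝ)) (ε : ℝ) :
    enorm (ContinuousMap.const K c) f < ε ↔ ‖f‖ < ε * c := by
  rw [enorm_const hc, div_lt_iff₀ hc]

lemma mem_closure_iff_enorm_const {c : ℝ} (hc : 0 < c) {T : Set C(K, ℝ)} {x : C(K, ℝ)} :
    x ∈ closure T ↔ ∀ ε, 0 < ε → ∃ y ∈ T, enorm (ContinuousMap.const K c) (x - y) < ε := by
  simp only [enorm_const_lt_iff hc, Metric.mem_closure_iff, dist_eq_norm, gt_iff_lt]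
  exact (forall_pos_mul_iff hc (p := fun δ => ∃ y ∈ T, ‖x - y‖ < δ)).symm

lemma closedIn_const_iff {c : ℝ} (hc : 0 < c) {C T : Set C(K, ℝ)} :
    ClosedIn (ContinuousMap.const K c) C T ↔ closure T ∩ C ⊆ T := by
  simp only [ClosedIn, ← mem_closure_iff_enorm_const hc]
  exact ⟨fun h x hx => h x hx.2 hx.1, fun h x hxC hx => h ⟨hx, hxC⟩⟩

lemma cauchySeq_iff_enorm_const {c : ℝ} (hc : 0 < c) {u : ℕ → C(K, ℝ)} :
    CauchySeq u ↔ ∀ ε, 0 < ε → ∃ N, ∀ m ≥ N, ∀ n ≥ N,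
      enorm (ContinuousMap.const K c) (u m - u n) < ε := by
  simp only [Metric.cauchySeq_iff, enorm_const_lt_iff hc, dist_eq_norm, gt_iff_lt]
  exact (forall_pos_mul_iff hc (p := fun δ => ∃ N, ∀ m ≥ N, ∀ n ≥ N, ‖u m - u n‖ < δ)).symm

lemma tendsto_iff_enorm_const {c : ℝ} (hc : 0 < c) {u : ℕ → C(K, ℝ)} {x : C(K, ℝ)} :
    Tendsto u atTop (𝓝 x) ↔ ∀ ε, 0 < ε → ∃ N, ∀ m ≥ N,
      enorm (ContinuousMap.const K c) (u m - x) < ε := by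
  simp only [Metric.tendsto_atTop, enorm_const_lt_iff hc, dist_eq_norm, gt_iff_lt]
  exact (forall_pos_mul_iff hc (p := fun δ => ∃ N, ∀ m ≥ N, ‖u m - x‖ < δ)).symm

lemma completeOn_const_iff {c : ℝ} (hc : 0 < c) {T : Set C(K, ℝ)} :
    CompleteOn (ContinuousMap.const K c) T ↔
      ∀ u : ℕ → C(K, ℝ), (∀ k, u k ∈ T) → CauchySeq u → ∃ x ∈ T, Tendsto u atTop (𝓝 x) := by
  simp only [CompleteOn, cauchySeq_iff_enorm_const hc, tendsto_iff_enorm_const hc]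

lemma completeOn_genClosedSubl_const {c : ℝ} (hc : 0 < c) {C A Y : Set C(K, ℝ)}
    (hY : IsClosed Y) (hYsubl : IsSubl Y) (hYC : Y ⊆ C) (hAY : A ⊆ Y) :
    CompleteOn (ContinuousMap.const K c) (genClosedSubl (ContinuousMap.const K c) C A) := by
  rw [completeOn_const_iff hc]
  intro u hu hcauchy
  obtain ⟨x, hx⟩ := cauchySeq_tendsto_of_complete hcauchy
  have hGY : genClosedSubl (ContinuousMap.const K c) C A ⊆ Y :=
    Set.sInter_subset_of_mem ⟨hYC, hAY, hYsubl, (closedIn_const_iff hc).2 fun y hy => by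
      rw [hY.closure_eq] at hy; exact hy.1⟩
  have hxC : x ∈ C := hYC (hY.mem_of_tendsto hx (Eventually.of_forall fun k => hGY (hu k)))
  refine ⟨x, Set.mem_sInter.2 fun T hT => ?_, hx⟩
  have hGT := Set.sInter_subset_of_mem hT
  exact (closedIn_const_iff hc).1 hT.2.2.2
    ⟨mem_closure_of_tendsto hx (Eventually.of_forall fun k => hGT (hu k)), hxC⟩

lemma not_completeOn_const_of_tendsto {c : ℝ} (hc : 0 < c) {T : Set C(K, ℝ)}
    {u : ℕ → C(K, ℝ)} {x : C(K, ℝ)} (hu : ∀ k, u k ∈ T) (hx : Tendsto u atTop (𝓝 x))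
    (hxT : x ∉ T) : ¬ CompleteOn (ContinuousMap.const K c) T := by
  rw [completeOn_const_iff hc]
  intro hcomplete
  obtain ⟨y, hyT, hy⟩ := hcomplete u hu hx.cauchySeq
  exact hxT (tendsto_nhds_unique hy hx ▸ hyT)

end SupNorm

section ConstNear

variable {K : Type*} [TopologicalSpace K]

/-- The sublattice `X` of the theorem. -/
def constNear (s₀ : K) : Set C(K, ℝ) := {f | ∃ U ∈ 𝓝 s₀, ∀ t ∈ U, f t = f s₀}

lemma mem_constNear_iff {s₀ : K} {f : C(K, ℝ)} :
    f ∈ constNear s₀ ↔ ∀ᶠ t in 𝓝 s₀, f t = f s₀ :=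
  ⟨fun ⟨_, hU, hf⟩ => mem_of_superset hU hf, fun h => ⟨_, h, fun _ ht => ht⟩⟩

lemma const_mem_constNear (s₀ : K) (c : ℝ) : ContinuousMap.const K c ∈ constNear s₀ :=
  mem_constNear_iff.2 (Eventually.of_forall fun _ => rfl)

lemma isSubl_setOf_eqOn (W : Set K) (s₀ : K) :
    IsSubl {g : C(K, ℝ) | ∀ t ∈ W, g t = g s₀} := by
  refine ⟨fun t _ => rfl, ?_, ?_, ?_⟩
  · intro a ha b hb t ht
    simp [ha t ht, hb t ht]
  · intro l a ha t ht
    simp [ha t ht]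
  · intro a ha b hb t ht
    simp [ha t ht, hb t ht]

lemma isClosed_setOf_eqOn (W : Set K) (s₀ : K) :
    IsClosed {g : C(K, ℝ) | ∀ t ∈ W, g t = g s₀} := by
  simp only [Set.ofPred_forall]
  exact isClosed_biInter fun t _ =>
    isClosed_eq (continuous_eval_const t) (continuous_eval_const s₀)

lemma exists_bump [T4Space K] {a s₀ : K} (ha : a ≠ s₀) :
    ∃ w : C(K, ℝ), (∀ t, w t ∈ Set.Icc 0 1) ∧ w a = 1 ∧ ∀ᶠ t in 𝓝 s₀, w t = 0 := by
  obtain ⟨V, hV, hVclosed, hVa⟩ :=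
    exists_mem_nhds_isClosed_subset (isOpen_compl_singleton.mem_nhds ha.symm)
  obtain ⟨w, hw0, hw1, hw01⟩ := exists_continuous_zero_one_of_isClosed hVclosed isClosed_singleton
    (Set.disjoint_singleton_right.2 fun h => hVa h rfl)
  exact ⟨w, hw01, hw1 rfl, mem_of_superset hV fun t ht => hw0 ht⟩

variable [CompactSpace K] [T2Space K]

lemma exists_tendsto_notMem_constNear {s₀ : K} {S : Set K} (hS : S.Countable)
    (hacc : AccPt s₀ (𝓟 S)) :
    ∃ v : ℕ → C(K, ℝ), (∀ m, v m ∈ constNear s₀) ∧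
      ∃ x ∉ constNear s₀, Tendsto v atTop (𝓝 x) := by
  have hfreq := accPt_iff_frequently.1 hacc
  obtain ⟨g, hg⟩ := (hS.mono Set.sdiff_subset : (S \ {s₀}).Countable).exists_eq_range
    (hfreq.exists.imp fun t ht => ⟨ht.2, ht.1⟩)
  have hg_ne k : g k ≠ s₀ := (hg.symm ▸ Set.mem_range_self k : g k ∈ S \ {s₀}).2
  choose w hw01 hw1 hw0 using fun k => exists_bump (hg_ne k)
  set a : ℕ → C(K, ℝ) := fun k => (2⁻¹ : ℝ) ^ k • w k
  have ha_apply k t : a k t = (2⁻¹ : ℝ) ^ k * w k t := rfl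
  have hsum : Summable a := by
    refine Summable.of_norm_bounded
      (summable_geometric_of_lt_one (r := 2⁻¹) (by norm_num) (by norm_num)) fun k => ?_
    rw [norm_smul, norm_pow, norm_inv, Real.norm_two]
    refine mul_le_of_le_one_right (by positivity) ((ContinuousMap.norm_le _ zero_le_one).2 ?_)
    intro t
    rw [Real.norm_of_nonneg (hw01 k t).1]
    exact (hw01 k t).2
  have hx_s₀ : (∑' k, a k) s₀ = 0 := by
    simp [← ContinuousMap.tsum_apply hsum, ha_apply, (hw0 _).self_of_nhds]
  have hx_pos k : 0 < (∑' k, a k) (g k) := by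
    rw [← ContinuousMap.tsum_apply hsum]
    refine lt_of_lt_of_le ?_ ((ContinuousMap.summable_apply hsum _).le_tsum k
      fun j _ => mul_nonneg (by positivity) (hw01 j _).1)
    simp [ha_apply, hw1]
  refine ⟨fun m => ∑ k ∈ Finset.range m, a k, fun m => ?_, ∑' k, a k, ?_,
    hsum.hasSum.tendsto_sum_nat⟩
  · have hzero : ∀ᶠ t in 𝓝 s₀, ∀ k ∈ Finset.range m, a k t = 0 :=
      (eventually_all_finset _).2 fun k _ => (hw0 k).mono fun t ht => by simp [ha_apply, ht]
    refine mem_constNear_iff.2 (hzero.mono fun t ht => ?_)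
    simp only [ContinuousMap.coe_sum, Finset.sum_apply]
    rw [Finset.sum_eq_zero ht, Finset.sum_eq_zero hzero.self_of_nhds]
  · intro hx
    obtain ⟨t, ⟨ht_ne, htS⟩, hxt⟩ := (hfreq.and_eventually (mem_constNear_iff.1 hx)).exists
    obtain ⟨k, rfl⟩ : t ∈ Set.range g := hg ▸ ⟨htS, ht_ne⟩
    exact (hx_pos k).ne' (hxt.trans hx_s₀)

end ConstNear

theorem stmt15_general {K : Type*} [TopologicalSpace K] [CompactSpace K] [T2Space K]
    (s₀ : K) (S : Set K) (hS : S.Countable)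
    (hacc : AccPt s₀ (Filter.principal S))
    (X : Set C(K, ℝ))
    (hX : X = {f : C(K, ℝ) | ∃ U ∈ nhds s₀, ∀ t ∈ U, f t = f s₀}) :
    -- `X` is finitely uniformly complete:
    (∀ (n : ℕ) (f : Fin n → C(K, ℝ)), (∀ i, f i ∈ X) →
      ∃ e ∈ X, 0 ≤ e ∧ (∀ i, |f i| ≤ e) ∧
        CompleteOn e (genClosedSubl e (Ie e ∩ X) (Set.range f))) ∧
    -- but not uniformly complete:
    ¬ (∀ e ∈ X, 0 ≤ e → CompleteOn e (Ie e ∩ X)) := by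
  change X = constNear s₀ at hX
  subst hX
  constructor
  · intro n f hf
    set c : ℝ := 1 + ∑ i, ‖f i‖
    have hc : 0 < c := by positivity
    have hfc i : ‖f i‖ ≤ c := by
      linarith [Finset.single_le_sum (fun j _ => norm_nonneg (f j)) (Finset.mem_univ i)]
    obtain ⟨W, hW, hfW⟩ := (eventually_all.2 fun i => mem_constNear_iff.1 (hf i)).exists_mem
    refine ⟨ContinuousMap.const K c, const_mem_constNear s₀ c, fun _ => hc.le,
      fun i => (ContinuousMap.abs_le_const_iff hc.le).2 (hfc i),
      completeOn_genClosedSubl_const hc (isClosed_setOf_eqOn W s₀) (isSubl_setOf_eqOn W s₀)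
        (fun g hg => ⟨mem_Ie_const hc g, W, hW, hg⟩) ?_⟩
    rintro _ ⟨i, rfl⟩ t ht
    exact hfW t ht i
  · intro hcomplete
    obtain ⟨v, hv, x, hx, hv_lim⟩ := exists_tendsto_notMem_constNear hS hacc
    exact not_completeOn_const_of_tendsto (T := Ie (ContinuousMap.const K 1) ∩ constNear s₀)
      one_pos (fun m => ⟨mem_Ie_const one_pos _, hv m⟩) hv_lim (fun hx' => hx hx'.2)
      (hcomplete _ (const_mem_constNear s₀ 1) fun _ => zero_le_one)

/-- the sublattice
`X = {f ∈ C(K) : f is constant on a neighbourhood of s₀}` of `C(K)` is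
finitely uniformly complete but not uniformly complete.  (All lattice/linear
operations and the norms `‖·‖_e` are computed in the ambient lattice `C(K)`,
of which `X` is a sublattice; the order ideal of `X` generated by `e ∈ X⁺` is
`I_e ∩ X`.) -/
theorem stmt15 {K : Type*} [TopologicalSpace K] [CompactSpace K] [T2Space K]
    [Infinite K]
    (s₀ : K) (S : Set K) (hS : S.Countable) (hSinf : S.Infinite)
    (hacc : AccPt s₀ (Filter.principal S))
    (X : Set C(K, ℝ))
    (hX : X = {f : C(K, ℝ) | ∃ U ∈ nhds s₀, ∀ t ∈ U, f t = f s₀}) :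
    -- `X` is finitely uniformly complete:
    (∀ (n : ℕ) (f : Fin n → C(K, ℝ)), (∀ i, f i ∈ X) →
      ∃ e ∈ X, 0 ≤ e ∧ (∀ i, |f i| ≤ e) ∧
        CompleteOn e (genClosedSubl e (Ie e ∩ X) (Set.range f))) ∧
    -- but not uniformly complete:
    ¬ (∀ e ∈ X, 0 ≤ e → CompleteOn e (Ie e ∩ X)) :=
  stmt15_general s₀ S hS hacc X hX
end

section
/- With K, s₀ and J = {f ∈ C(K) : f vanishes on some neighbourhood of s₀} as above, the quotient vector lattice Z = C(K)/J is not Archimedean: there is z ∈ Z⁺ \ {0} with n·z ≤ Q(1) for all n ∈ ℕ, where Q : C(K) → Z is the quotient map and 1 the constant function one. -/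
/-!
Enumerate the points of `S \ {s₀}` as `e 0, e 1, …`, take Urysohn functions `g m` with
`g m s₀ = 0` and `g m (e m) = 1`, and put `h = ∑ 2⁻ᵐ g m`. Then `h ≥ 0`, `h s₀ = 0` and `h > 0` on
`S \ {s₀}`, which accumulates at `s₀`, so `h` vanishes on no neighbourhood of `s₀`. On the other
hand `n • h < 1` near `s₀` by continuity, so `(n • h - 1) ⊔ 0` vanishes near `s₀`.
-/

open Filter Topology Set

universe u

variable {X : Type u} [TopologicalSpace X]

theorem exists_nonneg_eq_zero_pos_on_range [T35Space X] {x₀ : X} (e : ℕ → X)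
    (he : ∀ m, e m ≠ x₀) : ∃ h : C(X, ℝ), 0 ≤ h ∧ h x₀ = 0 ∧ ∀ m, 0 < h (e m) := by
  have separate m := CompletelyRegularSpace.completely_regular x₀ {e m} isClosed_singleton
    (he m).symm
  choose g hg_cont hg_x₀ hg_e using separate
  set u : ℕ → ℝ := fun m ↦ (1 / 2) ^ m
  have hu : Summable u := summable_geometric_two
  have hterm_nonneg m x : 0 ≤ u m * g m x := by positivity [(g m x).2.1]
  have hterm_le m x : u m * g m x ≤ u m := mul_le_of_le_one_right (by positivity) (g m x).2.2
  have hsum x : Summable fun m ↦ u m * g m x :=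
    hu.of_nonneg_of_le (hterm_nonneg · x) (hterm_le · x)
  have hcont : Continuous fun x ↦ ∑' m, u m * g m x :=
    continuous_tsum (fun m ↦ by fun_prop) hu fun m x ↦ by
      rw [Real.norm_of_nonneg (hterm_nonneg m x)]; exact hterm_le m x
  refine ⟨⟨_, hcont⟩, fun x ↦ tsum_nonneg (hterm_nonneg · x), by simp [hg_x₀], fun m ↦ ?_⟩
  refine (hsum (e m)).tsum_pos (hterm_nonneg · _) m ?_
  simp [u, hg_e m rfl]

theorem Set.Countable.exists_nonneg_eq_zero_pos [T35Space X] {x₀ : X} {T : Set X}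
    (hT : T.Countable) (hx₀ : x₀ ∉ T) : ∃ h : C(X, ℝ), 0 ≤ h ∧ h x₀ = 0 ∧ ∀ t ∈ T, 0 < h t := by
  rcases T.eq_empty_or_nonempty with rfl | hne
  · exact ⟨0, le_rfl, rfl, by simp⟩
  obtain ⟨e, rfl⟩ := hT.exists_eq_range hne
  obtain ⟨h, h_nonneg, h_x₀, h_pos⟩ :=
    exists_nonneg_eq_zero_pos_on_range e fun m hm ↦ hx₀ ⟨m, hm⟩
  exact ⟨h, h_nonneg, h_x₀, forall_mem_range.mpr h_pos⟩

theorem ContinuousMap.eventually_sub_one_sup_zero_eq_zero {f : C(X, ℝ)} {x₀ : X}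
    (hf : f x₀ < 1) : ∀ᶠ x in 𝓝 x₀, ((f - 1) ⊔ 0 : C(X, ℝ)) x = 0 :=
  (f.continuous.continuousAt.eventually_lt continuousAt_const hf).mono fun x hx ↦ by
    simp [hx.le]

theorem stmt17_general {K : Type*} [TopologicalSpace K] [CompactSpace K] [T2Space K]
    (s₀ : K) (S : Set K) (hS : S.Countable)
    (hacc : AccPt s₀ (Filter.principal S))
    (J : Set C(K, ℝ))
    (hJ : J = {f : C(K, ℝ) | ∃ U ∈ nhds s₀, ∀ t ∈ U, f t = 0}) :
    ∃ h : C(K, ℝ), 0 ≤ h ∧ h ∉ J ∧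
      ∀ n : ℕ, ((n • h - 1) ⊔ 0 : C(K, ℝ)) ∈ J := by
  simp only [hJ, mem_ofPred_eq, ← eventually_iff_exists_mem]
  obtain ⟨h, h_nonneg, h_s₀, h_pos⟩ := (hS.mono sdiff_subset).exists_nonneg_eq_zero_pos
    (notMem_sdiff_of_mem (mem_singleton s₀))
  refine ⟨h, h_nonneg, fun h_zero ↦ ?_, fun n ↦
    ContinuousMap.eventually_sub_one_sup_zero_eq_zero (by simp [h_s₀])⟩
  obtain ⟨t, ⟨ht_ne, ht_S⟩, ht_zero⟩ :=
    ((accPt_iff_frequently.mp hacc).and_eventually h_zero).exists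
  exact (h_pos t ⟨ht_S, ht_ne⟩).ne' ht_zero

/-- the quotient `Z = C(K)/J` of `C(K)` by the order ideal
`J = {f : f vanishes near s₀}` is not Archimedean: there is `z ∈ Z⁺ \ {0}`
with `n • z ≤ Q 1` for all `n`.  We express this via representatives: in the
quotient vector lattice, `Q f ≤ Q g ↔ (f - g) ⊔ 0 ∈ J`, `Q h ≥ 0` iff `h` may
be chosen with `h ≥ 0`, and `Q h ≠ 0 ↔ h ∉ J`.  Hence the claim reads: there
is `h ∈ C(K)` with `0 ≤ h`, `h ∉ J`, and `(n • h - 1) ⊔ 0 ∈ J` for all `n`. -/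
theorem stmt17 {K : Type*} [TopologicalSpace K] [CompactSpace K] [T2Space K]
    (s₀ : K) (S : Set K) (hS : S.Countable) (hSinf : S.Infinite)
    (hacc : AccPt s₀ (Filter.principal S))
    (J : Set C(K, ℝ))
    (hJ : J = {f : C(K, ℝ) | ∃ U ∈ nhds s₀, ∀ t ∈ U, f t = 0}) :
    ∃ h : C(K, ℝ), 0 ≤ h ∧ h ∉ J ∧
      ∀ n : ℕ, ((n • h - 1) ⊔ 0 : C(K, ℝ)) ∈ J :=
  stmt17_general s₀ S hS hacc J hJ
end
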